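/- arXiv:2604.14036 — 2 statements merged into one kernel-verified Lean document; each statement's English description precedes it below -/
import Mathlib

section
/- Every algebraic number α ∈ ℂ falls into exactly one of the following three mutually exclusive categories: (i) α has a Galois conjugate of modulus > 1; (ii) all Galois conjugates of α have modulus exactly 1; (iii) all Galois conjugates of α have modulus strictly less than 1. -/
/-! Once no conjugate lies outside the closed unit disc, the only point is that a conjugate `β`
on the unit circle forces all of them onto it. Indeed `β⁻¹ = conj β` is then a conjugate too, so
the irreducible minimal polynomial divides its reverse and is reciprocal up to a constant. Its
roots are therefore closed under inversion, and a conjugate in the open disc would have an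
inverse outside the closed one. -/

open Polynomial ComplexConjugate

section Reciprocal

variable {K L : Type*} [Field K] [Field L] [Algebra K L] {p : K[X]}

theorem Polynomial.aeval_inv_reverse_eq_zero {x : L} (hx0 : x ≠ 0) (hx : aeval x p = 0) :
    aeval x⁻¹ p.reverse = 0 := by
  have : Invertible x := invertibleOfNonzero hx0
  simpa only [invOf_eq_inv, ← aeval_def] using (eval₂_reverse_eq_zero_iff (algebraMap K L) x p).2 hx

theorem Irreducible.ne_zero_of_aeval_eq_zero (hp : Irreducible p) {x y : L} (hx0 : x ≠ 0)
    (hx : aeval x p = 0) (hy : aeval y p = 0) : y ≠ 0 := by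
  rintro rfl
  have hpX : p ∣ X := (hp.dvd_iff_aeval_eq_zero hy).1 (aeval_X 0)
  exact hx0 (by simpa using (hp.dvd_iff_aeval_eq_zero hx).2 hpX)

theorem Irreducible.aeval_inv_eq_zero (hp : Irreducible p) {x : L} (hx0 : x ≠ 0)
    (hx : aeval x p = 0) (hxinv : aeval x⁻¹ p = 0) {y : L} (hy : aeval y p = 0) :
    aeval y⁻¹ p = 0 := by
  obtain ⟨u, hu⟩ : p ∣ p.reverse :=
    (hp.dvd_iff_aeval_eq_zero hxinv).1 (aeval_inv_reverse_eq_zero hx0 hx)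
  have hu0 : u ≠ 0 := right_ne_zero_of_mul (hu ▸ reverse_eq_zero.not.2 hp.ne_zero)
  have hunit : IsUnit u := by
    have := natDegree_mul hp.ne_zero hu0
    rw [← hu] at this
    have := reverse_natDegree_le p
    rw [isUnit_iff_degree_eq_zero, degree_eq_natDegree hu0]
    norm_cast
    omega
  have hyinv := aeval_inv_reverse_eq_zero (hp.ne_zero_of_aeval_eq_zero hx0 hx hy) hy
  rw [hu, map_mul] at hyinv
  exact (mul_eq_zero.1 hyinv).resolve_right (hunit.map (aeval y⁻¹)).ne_zero

end Reciprocal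

theorem Polynomial.aeval_conj_of_rat (p : ℚ[X]) (z : ℂ) : aeval (conj z) p = conj (aeval z p) := by
  rw [← aeval_map_algebraMap ℝ, ← aeval_map_algebraMap ℝ (x := z)]
  exact aeval_conj _ _

theorem Irreducible.norm_eq_one_of_forall_norm_le_one {p : ℚ[X]} (hp : Irreducible p)
    (hle : ∀ z : ℂ, aeval z p = 0 → ‖z‖ ≤ 1) {β : ℂ} (hβ : aeval β p = 0) (hβ1 : ‖β‖ = 1)
    {z : ℂ} (hz : aeval z p = 0) : ‖z‖ = 1 := by
  have hβ0 : β ≠ 0 := norm_ne_zero_iff.1 (hβ1 ▸ one_ne_zero)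
  have hβinv : aeval β⁻¹ p = 0 := by rw [Complex.inv_eq_conj hβ1, aeval_conj_of_rat, hβ, map_zero]
  have hz0 : 0 < ‖z‖ := norm_pos_iff.2 (hp.ne_zero_of_aeval_eq_zero hβ0 hβ hz)
  have hzinv := hle _ (hp.aeval_inv_eq_zero hβ0 hβ hβinv hz)
  rw [norm_inv, inv_le_one₀ hz0] at hzinv
  exact le_antisymm (hle z hz) hzinv

/-- Every algebraic number falls into exactly one of three categories:
(i) some Galois conjugate has modulus > 1; (ii) all Galois conjugates have modulus 1;
(iii) all Galois conjugates have modulus < 1. -/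
theorem stmt5 (α : ℂ) (hα : IsAlgebraic ℚ α) :
    ((∃ β : ℂ, Polynomial.aeval β (minpoly ℚ α) = 0 ∧ 1 < ‖β‖) ∧
      ¬ (∀ β : ℂ, Polynomial.aeval β (minpoly ℚ α) = 0 → ‖β‖ = 1) ∧
      ¬ (∀ β : ℂ, Polynomial.aeval β (minpoly ℚ α) = 0 → ‖β‖ < 1)) ∨
    ((∀ β : ℂ, Polynomial.aeval β (minpoly ℚ α) = 0 → ‖β‖ = 1) ∧
      ¬ (∃ β : ℂ, Polynomial.aeval β (minpoly ℚ α) = 0 ∧ 1 < ‖β‖) ∧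
      ¬ (∀ β : ℂ, Polynomial.aeval β (minpoly ℚ α) = 0 → ‖β‖ < 1)) ∨
    ((∀ β : ℂ, Polynomial.aeval β (minpoly ℚ α) = 0 → ‖β‖ < 1) ∧
      ¬ (∃ β : ℂ, Polynomial.aeval β (minpoly ℚ α) = 0 ∧ 1 < ‖β‖) ∧
      ¬ (∀ β : ℂ, Polynomial.aeval β (minpoly ℚ α) = 0 → ‖β‖ = 1)) := by
  have hirr := minpoly.irreducible hα.isIntegral
  have hαroot := minpoly.aeval ℚ α
  by_cases hgt : ∃ β : ℂ, aeval β (minpoly ℚ α) = 0 ∧ 1 < ‖β‖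
  · obtain ⟨β, hβ, hβ1⟩ := hgt
    exact Or.inl ⟨⟨β, hβ, hβ1⟩, fun h => (h β hβ).not_gt hβ1, fun h => (h β hβ).not_gt hβ1⟩
  have hle : ∀ β : ℂ, aeval β (minpoly ℚ α) = 0 → ‖β‖ ≤ 1 := fun β hβ =>
    not_lt.1 fun hβ1 => hgt ⟨β, hβ, hβ1⟩
  by_cases hone : ∀ β : ℂ, aeval β (minpoly ℚ α) = 0 → ‖β‖ = 1
  · exact Or.inr <| Or.inl ⟨hone, fun ⟨β, hβ, hβ1⟩ => hβ1.ne' (hone β hβ),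
      fun hlt => (hlt α hαroot).ne (hone α hαroot)⟩
  have hlt : ∀ β : ℂ, aeval β (minpoly ℚ α) = 0 → ‖β‖ < 1 := fun β hβ =>
    (hle β hβ).lt_of_ne fun hβ1 => hone fun _ => hirr.norm_eq_one_of_forall_norm_le_one hle hβ hβ1
  exact Or.inr <| Or.inr ⟨hlt, fun ⟨β, hβ, hβ1⟩ => (hlt β hβ).not_gt hβ1, hone⟩
end

section
/- Let p_j, q_j (1 ≤ j ≤ n) be integers with p_j > |q_j| > 0 and set R(x) = Π_{j=1}^{n}(q_j x − p_j). Then the reduced length ℓ(R) equals exactly p_1⋯p_n; in particular ℓ(R) ≥ M(R) where M(R) denotes the Mahler measure of R. -/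
/-- The length of a real polynomial: the sum of the absolute values of its coefficients. -/
noncomputable def polyLength (P : Polynomial ℝ) : ℝ :=
  ∑ i ∈ Finset.range (P.natDegree + 1), |P.coeff i|

/-!
Lower bound (Schinzel): a polynomial `Q` that is monic or has constant term `1` has Mahler measure
at least `1`, so `M(R) ≤ M(R) M(Q) = M(RQ) ≤ L(RQ)`, and `M(R) = ∏ max (|q_j|, p_j) = ∏ p_j`.

Upper bound: `(q x - p) ∑_{k<N} (q x / p)^k = p ((q / p)^N x^N - 1)` has length
`p (|q / p|^N + 1) → p`, and the length is submultiplicative.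
-/

open Polynomial Finset

lemma polyLength_eq_sum (P : ℝ[X]) : polyLength P = P.sum fun _ a => |a| :=
  (sum_over_range P fun _ => abs_zero).symm

lemma polyLength_eq_sum_range {P : ℝ[X]} {m : ℕ} (h : P.natDegree < m) :
    polyLength P = ∑ i ∈ range m, |P.coeff i| := by
  rw [polyLength_eq_sum, sum_over_range' P (fun _ => abs_zero) m h]

lemma polyLength_nonneg (P : ℝ[X]) : 0 ≤ polyLength P :=
  sum_nonneg fun _ _ => abs_nonneg _

lemma polyLength_C (a : ℝ) : polyLength (C a) = |a| := by
  simp [polyLength]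

lemma polyLength_one : polyLength 1 = 1 := by
  simpa using polyLength_C 1

lemma polyLength_add_le (f g : ℝ[X]) : polyLength (f + g) ≤ polyLength f + polyLength g := by
  have hlt {P : ℝ[X]} (h : P.natDegree ≤ max f.natDegree g.natDegree) :
      P.natDegree < max f.natDegree g.natDegree + 1 := Nat.lt_succ_of_le h
  rw [polyLength_eq_sum_range (hlt (natDegree_add_le f g)),
    polyLength_eq_sum_range (hlt (le_max_left _ _)),
    polyLength_eq_sum_range (hlt (le_max_right _ _)), ← sum_add_distrib]
  exact sum_le_sum fun i _ => (coeff_add f g i).symm ▸ abs_add_le _ _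

lemma polyLength_C_mul (a : ℝ) (g : ℝ[X]) : polyLength (C a * g) = |a| * polyLength g := by
  have hg := Nat.lt_succ_self g.natDegree
  rw [polyLength_eq_sum_range ((natDegree_C_mul_le a g).trans_lt hg),
    polyLength_eq_sum_range hg, mul_sum]
  simp only [coeff_C_mul, abs_mul]

lemma polyLength_neg (g : ℝ[X]) : polyLength (-g) = polyLength g := by
  simpa using polyLength_C_mul (-1) g

lemma polyLength_sub_le (f g : ℝ[X]) : polyLength (f - g) ≤ polyLength f + polyLength g := by
  simpa [sub_eq_add_neg, polyLength_neg] using polyLength_add_le f (-g)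

lemma polyLength_X_pow_mul (n : ℕ) (g : ℝ[X]) : polyLength (X ^ n * g) = polyLength g := by
  have hdeg : (X ^ n * g).natDegree < n + (g.natDegree + 1) :=
    natDegree_mul_le.trans_lt (by have := natDegree_X_pow_le (R := ℝ) n; omega)
  rw [polyLength_eq_sum_range hdeg, sum_range_add,
    polyLength_eq_sum_range (Nat.lt_succ_self _)]
  have hlow : ∑ i ∈ range n, |(X ^ n * g).coeff i| = 0 :=
    sum_eq_zero fun i hi => by simp [coeff_X_pow_mul', (mem_range.mp hi).not_ge]
  simp [hlow, add_comm n]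

lemma polyLength_mul_le (f g : ℝ[X]) : polyLength (f * g) ≤ polyLength f * polyLength g :=
  calc polyLength (f * g) = polyLength (∑ i ∈ f.support, C (f.coeff i) * (X ^ i * g)) := by
        conv_lhs => rw [f.as_sum_support_C_mul_X_pow, sum_mul]
        simp only [mul_assoc]
    _ ≤ ∑ i ∈ f.support, polyLength (C (f.coeff i) * (X ^ i * g)) :=
        le_sum_of_subadditive polyLength (by simp [polyLength]) polyLength_add_le _ _
    _ = polyLength f * polyLength g := by
        simp only [polyLength_C_mul, polyLength_X_pow_mul, ← sum_mul, polyLength_eq_sum f,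
          Polynomial.sum_def]

lemma polyLength_prod_le {ι : Type*} (s : Finset ι) (f : ι → ℝ[X]) :
    polyLength (∏ i ∈ s, f i) ≤ ∏ i ∈ s, polyLength (f i) :=
  le_prod_of_submultiplicative_of_nonneg polyLength polyLength_nonneg polyLength_one.le
    polyLength_mul_le s f

lemma polyLength_X_pow (n : ℕ) : polyLength (X ^ n) = 1 := by
  simpa [polyLength_one] using polyLength_X_pow_mul n 1

lemma C_mul_X_sub_C_mul_geom_sum (a b : ℝ) (hb : b ≠ 0) (N : ℕ) :
    (C a * X - C b) * ∑ i ∈ range N, (C (a / b) * X) ^ i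
      = C (b * (a / b) ^ N) * X ^ N - C b := by
  have hfactor : C a * X - C b = C b * (C (a / b) * X - 1) := by
    rw [mul_sub, ← mul_assoc, ← C_mul, mul_div_cancel₀ a hb, mul_one]
  rw [hfactor, mul_assoc, mul_comm (C (a / b) * X - 1), geom_sum_mul, mul_pow, ← C_pow,
    mul_sub, mul_one, ← mul_assoc, ← C_mul]

lemma polyLength_C_mul_X_sub_C_mul_geom_sum_le (a b : ℝ) (hb : b ≠ 0) (N : ℕ) :
    polyLength ((C a * X - C b) * ∑ i ∈ range N, (C (a / b) * X) ^ i)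
      ≤ |b| * |a / b| ^ N + |b| := by
  rw [C_mul_X_sub_C_mul_geom_sum a b hb N]
  refine (polyLength_sub_le _ _).trans_eq ?_
  rw [polyLength_C_mul, polyLength_X_pow, polyLength_C, abs_mul, abs_pow, mul_one]

lemma exists_coeff_zero_eq_one_polyLength_prod_mul_lt {ι : Type*} [Fintype ι] (a b : ι → ℝ)
    (hab : ∀ i, |a i| < |b i|) {w : ℝ} (hw : ∏ i, |b i| < w) :
    ∃ Q : ℝ[X], Q.coeff 0 = 1 ∧ polyLength ((∏ i, (C (a i) * X - C (b i))) * Q) < w := by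
  have hb (i : ι) : b i ≠ 0 := abs_pos.mp ((abs_nonneg _).trans_lt (hab i))
  have hlim : Filter.Tendsto (fun N : ℕ => ∏ i, (|b i| * |a i / b i| ^ N + |b i|))
      Filter.atTop (nhds (∏ i, |b i|)) := by
    refine tendsto_finsetProd _ fun i _ => ?_
    have hratio : |a i / b i| < 1 := by rw [abs_div, div_lt_one (abs_pos.mpr (hb i))]; exact hab i
    simpa using ((tendsto_pow_atTop_nhds_zero_of_lt_one (abs_nonneg _) hratio).const_mul
      |b i|).add_const |b i|
  obtain ⟨N, hN, hNw⟩ := ((Filter.eventually_ge_atTop 1).and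
    (hlim.eventually (gt_mem_nhds hw))).exists
  refine ⟨∏ i, ∑ k ∈ range N, (C (a i / b i) * X) ^ k, ?_, ?_⟩
  · simp [coeff_zero_eq_eval_zero, eval_prod, eval_finsetSum, Nat.one_le_iff_ne_zero.mp hN]
  · rw [← prod_mul_distrib]
    exact ((polyLength_prod_le _ _).trans
      (prod_le_prod (fun _ _ => polyLength_nonneg _)
        fun i _ => polyLength_C_mul_X_sub_C_mul_geom_sum_le _ _ (hb i) N)).trans_lt hNw

lemma one_le_mapMahlerMeasure_of_coeff_zero_eq_one {A : Type*} [NormedRing A] [NormOneClass A]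
    {p : A[X]} (v : A →+* ℂ) (hv : Isometry v) (hp : p.coeff 0 = 1) :
    1 ≤ p.mapMahlerMeasure v := by
  simpa [hp] using norm_coeff_le_choose_mul_mapMahlerMeasure v hv 0 p

lemma mapMahlerMeasure_le_polyLength_mul (R Q : ℝ[X])
    (hQ : Q.leadingCoeff = 1 ∨ Q.coeff 0 = 1) :
    R.mapMahlerMeasure (algebraMap ℝ ℂ) ≤ polyLength (R * Q) := by
  have hv : Isometry (algebraMap ℝ ℂ) := Complex.isometry_ofReal
  have hQ1 : 1 ≤ Q.mapMahlerMeasure (algebraMap ℝ ℂ) := hQ.elim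
    (fun h => Monic.one_le_mapMahlerMeasure _ hv h)
    (one_le_mapMahlerMeasure_of_coeff_zero_eq_one _ hv)
  calc R.mapMahlerMeasure (algebraMap ℝ ℂ)
      ≤ R.mapMahlerMeasure (algebraMap ℝ ℂ) * Q.mapMahlerMeasure (algebraMap ℝ ℂ) :=
        le_mul_of_one_le_right (mapMahlerMeasure_nonneg _ _) hQ1
    _ = (R * Q).mapMahlerMeasure (algebraMap ℝ ℂ) := (mapMahlerMeasure_mul _ _ _).symm
    _ ≤ polyLength (R * Q) := by
        simpa [polyLength_eq_sum] using mapMahlerMeasure_le_sum_norm_coeff (R * Q) _ hv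

lemma mahlerMeasure_C_mul_X_sub_C (a b : ℂ) : (C a * X - C b).mahlerMeasure = max ‖a‖ ‖b‖ := by
  rcases eq_or_ne a 0 with rfl | ha
  · rw [C_0, zero_mul, zero_sub, ← C_neg, mahlerMeasure_const]
    simp
  · simpa [← sub_eq_add_neg] using mahlerMeasure_C_mul_X_add_C ha (-b)

lemma mapMahlerMeasure_prod_C_mul_X_sub_C {ι : Type*} (s : Finset ι) (a b : ι → ℝ) :
    (∏ i ∈ s, (C (a i) * X - C (b i))).mapMahlerMeasure (algebraMap ℝ ℂ)
      = ∏ i ∈ s, max |a i| |b i| := by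
  rw [mapMahlerMeasure_eq, Polynomial.map_prod, prod_eq_multiset_prod,
    prod_mahlerMeasure_eq_mahlerMeasure_prod, Multiset.map_map, prod_map_val]
  refine prod_congr rfl fun i _ => ?_
  simp [mahlerMeasure_C_mul_X_sub_C]

/-- For `R(x) = Π (q_j x - p_j)` with `p_j > |q_j| > 0`, the reduced length
`ℓ(R)` equals `p_1 ⋯ p_n`; in particular `ℓ(R) ≥ M(R)`, the Mahler measure of `R`. -/
theorem stmt16 (n : ℕ) (p q : Fin n → ℤ) (hpq : ∀ j, 0 < |q j| ∧ |q j| < p j) :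
    sInf {l : ℝ | ∃ Q : Polynomial ℝ, (Q.leadingCoeff = 1 ∨ Q.coeff 0 = 1) ∧
        l = polyLength
          ((∏ j, (Polynomial.C (q j : ℝ) * Polynomial.X - Polynomial.C (p j : ℝ))) * Q)}
      = ∏ j, (p j : ℝ) ∧
    ‖(((∏ j, (Polynomial.C (q j : ℝ) * Polynomial.X - Polynomial.C (p j : ℝ))).map
          (algebraMap ℝ ℂ)).leadingCoeff)‖ *
      ((((∏ j, (Polynomial.C (q j : ℝ) * Polynomial.X - Polynomial.C (p j : ℝ))).map
          (algebraMap ℝ ℂ)).roots).map (fun z => max 1 (‖z‖))).prod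
      ≤ sInf {l : ℝ | ∃ Q : Polynomial ℝ, (Q.leadingCoeff = 1 ∨ Q.coeff 0 = 1) ∧
        l = polyLength
          ((∏ j, (Polynomial.C (q j : ℝ) * Polynomial.X - Polynomial.C (p j : ℝ))) * Q)} := by
  set R := ∏ j, (C (q j : ℝ) * X - C (p j : ℝ))
  have hp0 (j : Fin n) : (0 : ℝ) < p j := mod_cast (abs_nonneg _).trans_lt (hpq j).2
  have hqp (j : Fin n) : |(q j : ℝ)| < |(p j : ℝ)| := by
    rw [abs_of_pos (hp0 j), ← Int.cast_abs]
    exact_mod_cast (hpq j).2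
  have hp : ∏ j, |(p j : ℝ)| = ∏ j, (p j : ℝ) := prod_congr rfl fun j _ => abs_of_pos (hp0 j)
  have hM : R.mapMahlerMeasure (algebraMap ℝ ℂ) = ∏ j, (p j : ℝ) := by
    rw [mapMahlerMeasure_prod_C_mul_X_sub_C, ← hp]
    exact prod_congr rfl fun j _ => max_eq_right (hqp j).le
  have hinf : sInf {l : ℝ | ∃ Q : ℝ[X], (Q.leadingCoeff = 1 ∨ Q.coeff 0 = 1) ∧
      l = polyLength (R * Q)} = ∏ j, (p j : ℝ) := by
    refine csInf_eq_of_forall_ge_of_forall_gt_exists_lt ⟨_, 1, .inl leadingCoeff_one, rfl⟩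
      ?_ fun w hw => ?_
    · rintro _ ⟨Q, hQ, rfl⟩
      exact hM ▸ mapMahlerMeasure_le_polyLength_mul R Q hQ
    · obtain ⟨Q, hQ, hlt⟩ := exists_coeff_zero_eq_one_polyLength_prod_mul_lt _ _ hqp (hp ▸ hw)
      exact ⟨_, ⟨Q, .inr hQ, rfl⟩, hlt⟩
  refine ⟨hinf, ?_⟩
  rw [← mahlerMeasure_eq_leadingCoeff_mul_prod_roots, ← mapMahlerMeasure_eq, hM, hinf]
end
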